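/- Let X be a real-valued stochastic process indexed by ℝ with continuous sample paths on a probability space (Ω, 𝔉, P), strictly stationary. Fix S > 0, s̃ ∈ (0, S), u ∈ ℝ, and let 0 < h, 0 < h' with h + h' ≤ S − s̃. For g ∈ [0, S − s̃] define μ(g) = P( sup_{s∈[g, s̃+g]} X(s) ≥ u and sup_{s∈[0,S]∖[g, s̃+g]} X(s) < u ). Then μ(h+h') − μ(h) = P( sup_{s∈[h, s̃+h]} X(s) ≥ u, sup_{s∈[S−h', S]} X(s) ≥ u, sup_{s∈[0, S−h']∖[h, s̃+h]} X(s) < u ) − P( sup_{s∈[h, s̃+h]} X(s) ≥ u, sup_{s∈[−h', 0]} X(s) ≥ u, sup_{s∈[0, S−h']∖[h, s̃+h]} X(s) < u ). -/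

import Mathlib

/-!
Put `I = [h, st + h]`, `D = [0, S - h'] \ I` and `E = {sup_I X ≥ u, sup_D X < u}`. Splitting
`[0, S] \ I` at `S - h'` gives `μ(h) = P(E ∩ {sup_[S-h', S] X < u})`. Shifting time by `h'`
(stationarity) and splitting `[-h', S - h'] \ I` at `0` gives
`μ(h + h') = P(E ∩ {sup_[-h', 0] X < u})`. The two events on the right are `E` minus these
sub-events, so subtracting both identities from `P(E)` gives the claim.

For a continuous path the supremum over a set equals the supremum over a fixed countable dense
subset of it; this makes these suprema measurable and their joint law a function of the law of
the path.
-/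

open MeasureTheory Set Bornology

theorem csSup_eq_csSup_of_subset_of_subset_closure {α : Type*}
    [ConditionallyCompleteLinearOrder α] [TopologicalSpace α] [ClosedIicTopology α]
    {s t : Set α} (hst : s ⊆ t) (hts : t ⊆ closure s) : sSup s = sSup t := by
  rcases s.eq_empty_or_nonempty with rfl | hs
  · rw [closure_empty, subset_empty_iff] at hts
    rw [hts]
  by_cases hb : BddAbove s
  · exact (((isLUB_iff_of_subset_of_subset_closure hst hts).1 (isLUB_csSup hs hb)).csSup_eq
      (hs.mono hst)).symm
  · rw [csSup_of_not_bddAbove hb, csSup_of_not_bddAbove fun ht => hb (ht.mono hst)]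

section ContinuousImage

variable {α β : Type*} [TopologicalSpace α] [ConditionallyCompleteLinearOrder β]
  [TopologicalSpace β] [ClosedIicTopology β] {f : α → β}

theorem Continuous.csSup_image_eq_of_subset_closure (hf : Continuous f) {c s : Set α}
    (hcs : c ⊆ s) (hsc : s ⊆ closure c) : sSup (f '' c) = sSup (f '' s) :=
  csSup_eq_csSup_of_subset_of_subset_closure (image_mono hcs)
    ((image_mono hsc).trans (image_closure_subset_closure_image hf))

theorem exists_countable_forall_csSup_image_eq_iSup [TopologicalSpace.SeparableSpace α]
    [TopologicalSpace.PseudoMetrizableSpace α] (s : Set α) :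
    ∃ c : Set α, c.Countable ∧ ∀ f : α → β, Continuous f → sSup (f '' s) = ⨆ x : c, f x := by
  obtain ⟨c, hcs, hc, hsc⟩ :=
    (TopologicalSpace.IsSeparable.of_separableSpace s).exists_countable_dense_subset
  exact ⟨c, hc, fun f hf => by rw [← hf.csSup_image_eq_of_subset_closure hcs hsc, sSup_image']⟩

end ContinuousImage

section Intervals

variable {α : Type*} [LinearOrder α] {I : Set α} {a b c d : α}

theorem Icc_sdiff_eq_Icc_sdiff_union_Ioc (hac : a ≤ c) (hcd : c ≤ d) (hI : I ⊆ Iic c) :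
    Icc a d \ I = (Icc a c \ I) ∪ Ioc c d := by
  rw [← Icc_union_Ioc_eq_Icc hac hcd, union_sdiff_distrib,
    ((Iic_disjoint_Ioc le_rfl).mono_left hI).symm.sdiff_eq_left]

theorem Icc_sdiff_eq_Ico_union_Icc_sdiff (hab : a ≤ b) (hbd : b ≤ d) (hI : I ⊆ Ici b) :
    Icc a d \ I = Ico a b ∪ (Icc b d \ I) := by
  rw [← Ico_union_Icc_eq_Icc hab hbd, union_sdiff_distrib,
    ((Iio_disjoint_Ici le_rfl).mono Ico_subset_Iio_self hI).sdiff_eq_left]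

end Intervals

section RealPaths

variable {f : ℝ → ℝ} {I s : Set ℝ} {a b c d u : ℝ}

theorem Continuous.csSup_image_union_lt_iff (hf : Continuous f) {t : Set ℝ} (hs : s.Nonempty)
    (ht : t.Nonempty) (hsb : IsBounded s) (htb : IsBounded t) :
    sSup (f '' (s ∪ t)) < u ↔ sSup (f '' s) < u ∧ sSup (f '' t) < u := by
  have bdd : ∀ {r : Set ℝ}, IsBounded r → BddAbove (f '' r) := fun hr =>
    (hr.isCompact_closure.image hf).bddAbove.mono (image_mono subset_closure)
  rw [image_union, csSup_union (bdd hsb) (hs.image f) (bdd htb) (ht.image f), sup_lt_iff]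

theorem Continuous.csSup_image_Icc_sdiff_lt_iff_of_subset_Iic (hf : Continuous f) (hac : a ≤ c)
    (hcd : c < d) (hI : I ⊆ Iic c) (hne : (Icc a c \ I).Nonempty) :
    sSup (f '' (Icc a d \ I)) < u ↔ sSup (f '' (Icc a c \ I)) < u ∧ sSup (f '' Icc c d) < u := by
  rw [Icc_sdiff_eq_Icc_sdiff_union_Ioc hac hcd.le hI,
    hf.csSup_image_union_lt_iff hne (nonempty_Ioc.2 hcd)
      ((Metric.isBounded_Icc a c).subset sdiff_subset) (Metric.isBounded_Ioc c d),
    hf.csSup_image_eq_of_subset_closure Ioc_subset_Icc_self (closure_Ioc hcd.ne).superset]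

theorem Continuous.csSup_image_Icc_sdiff_lt_iff_of_subset_Ici (hf : Continuous f) (hab : a < b)
    (hbd : b ≤ d) (hI : I ⊆ Ici b) (hne : (Icc b d \ I).Nonempty) :
    sSup (f '' (Icc a d \ I)) < u ↔ sSup (f '' Icc a b) < u ∧ sSup (f '' (Icc b d \ I)) < u := by
  rw [Icc_sdiff_eq_Ico_union_Icc_sdiff hab.le hbd hI,
    hf.csSup_image_union_lt_iff (nonempty_Ico.2 hab) hne (Metric.isBounded_Ico a b)
      ((Metric.isBounded_Icc b d).subset sdiff_subset),
    hf.csSup_image_eq_of_subset_closure Ico_subset_Icc_self (closure_Ico hab.ne).superset]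

end RealPaths

theorem measureReal_inter_sub_measureReal_inter {α : Type*} [MeasurableSpace α] (μ : Measure α)
    [IsFiniteMeasure μ] (s : Set α) {t t' : Set α} (ht : MeasurableSet t)
    (ht' : MeasurableSet t') :
    μ.real (s ∩ t) - μ.real (s ∩ t') = μ.real (s \ t') - μ.real (s \ t) := by
  have := measureReal_inter_add_sdiff (μ := μ) (s := s) ht
  have := measureReal_inter_add_sdiff (μ := μ) (s := s) ht'
  linarith

section ContinuousProcess

variable {Ω : Type*} [MeasurableSpace Ω] {X : Ω → ℝ → ℝ}

theorem measurable_csSup_image (hCont : ∀ ω, Continuous (X ω))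
    (hMeas : ∀ s, Measurable fun ω => X ω s) (s : Set ℝ) :
    Measurable fun ω => sSup (X ω '' s) := by
  obtain ⟨c, hc, hsup⟩ := exists_countable_forall_csSup_image_eq_iSup (β := ℝ) s
  have := hc.to_subtype
  simp_rw [hsup _ (hCont _)]
  exact Measurable.iSup fun x => hMeas x

theorem map_csSup_image_prod_eq_of_map_eq {Y : Ω → ℝ → ℝ} (P : Measure Ω)
    (hXc : ∀ ω, Continuous (X ω)) (hYc : ∀ ω, Continuous (Y ω))
    (hXm : ∀ s, Measurable fun ω => X ω s) (hYm : ∀ s, Measurable fun ω => Y ω s)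
    (hlaw : P.map X = P.map Y) (A B : Set ℝ) :
    P.map (fun ω => (sSup (X ω '' A), sSup (X ω '' B)))
      = P.map (fun ω => (sSup (Y ω '' A), sSup (Y ω '' B))) := by
  obtain ⟨a, ha, hA⟩ := exists_countable_forall_csSup_image_eq_iSup (β := ℝ) A
  obtain ⟨b, hb, hB⟩ := exists_countable_forall_csSup_image_eq_iSup (β := ℝ) B
  have := ha.to_subtype
  have := hb.to_subtype
  let Φ : (ℝ → ℝ) → ℝ × ℝ := fun g => (⨆ x : a, g x, ⨆ x : b, g x)
  have hΦ : Measurable Φ := (Measurable.iSup fun x : a => measurable_pi_apply (x : ℝ)).prodMk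
    (Measurable.iSup fun x : b => measurable_pi_apply (x : ℝ))
  have hX : (fun ω => (sSup (X ω '' A), sSup (X ω '' B))) = Φ ∘ X :=
    funext fun ω => by simp only [Φ, Function.comp, hA _ (hXc ω), hB _ (hXc ω)]
  have hY : (fun ω => (sSup (Y ω '' A), sSup (Y ω '' B))) = Φ ∘ Y :=
    funext fun ω => by simp only [Φ, Function.comp, hA _ (hYc ω), hB _ (hYc ω)]
  rw [hX, hY, ← Measure.map_map hΦ (measurable_pi_lambda _ hXm),
    ← Measure.map_map hΦ (measurable_pi_lambda _ hYm), hlaw]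

theorem measure_csSup_image_image_add_const (P : Measure Ω) (hCont : ∀ ω, Continuous (X ω))
    (hMeas : ∀ s, Measurable fun ω => X ω s) {t : ℝ}
    (hStat : P.map (fun ω s => X ω (s + t)) = P.map X) (u : ℝ) (A B : Set ℝ) :
    P {ω | u ≤ sSup (X ω '' ((· + t) '' A)) ∧ sSup (X ω '' ((· + t) '' B)) < u}
      = P {ω | u ≤ sSup (X ω '' A) ∧ sSup (X ω '' B) < u} := by
  have hShiftCont : ∀ ω, Continuous fun s => X ω (s + t) :=
    fun ω => (hCont ω).comp (continuous_add_const t)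
  have hShiftMeas : ∀ s, Measurable fun ω => X ω (s + t) := fun s => hMeas (s + t)
  have hK : MeasurableSet {p : ℝ × ℝ | u ≤ p.1 ∧ p.2 < u} :=
    (measurableSet_le measurable_const measurable_fst).inter
      (measurableSet_lt measurable_snd measurable_const)
  have hlaw := congrArg (· {p : ℝ × ℝ | u ≤ p.1 ∧ p.2 < u})
    (map_csSup_image_prod_eq_of_map_eq P hShiftCont hCont hShiftMeas hMeas hStat A B)
  rw [Measure.map_apply ((measurable_csSup_image hShiftCont hShiftMeas A).prodMk
      (measurable_csSup_image hShiftCont hShiftMeas B)) hK,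
    Measure.map_apply ((measurable_csSup_image hCont hMeas A).prodMk
      (measurable_csSup_image hCont hMeas B)) hK] at hlaw
  simp only [image_image]
  exact hlaw

end ContinuousProcess

theorem stationary_window_difference_identity_general
    {Ω : Type*} [MeasurableSpace Ω] (P : Measure Ω) [IsProbabilityMeasure P]
    (X : Ω → ℝ → ℝ)
    (hCont : ∀ ω, Continuous (X ω))
    (hMeas : ∀ s : ℝ, Measurable (fun ω => X ω s))
    (hStat : ∀ t : ℝ,
      Measure.map (fun ω => fun s => X ω (s + t)) P = Measure.map (fun ω => X ω) P)
    (S st u : ℝ) (hst : st ∈ Set.Ioo 0 S)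
    (h h' : ℝ) (hh : 0 < h) (hh' : 0 < h') (hsum : h + h' ≤ S - st) :
    (P {ω | u ≤ sSup (X ω '' Set.Icc (h + h') (st + (h + h'))) ∧
        sSup (X ω '' (Set.Icc 0 S \ Set.Icc (h + h') (st + (h + h')))) < u}).toReal
      - (P {ω | u ≤ sSup (X ω '' Set.Icc h (st + h)) ∧
          sSup (X ω '' (Set.Icc 0 S \ Set.Icc h (st + h))) < u}).toReal
      = (P {ω | u ≤ sSup (X ω '' Set.Icc h (st + h)) ∧
            u ≤ sSup (X ω '' Set.Icc (S - h') S) ∧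
            sSup (X ω '' (Set.Icc 0 (S - h') \ Set.Icc h (st + h))) < u}).toReal
        - (P {ω | u ≤ sSup (X ω '' Set.Icc h (st + h)) ∧
            u ≤ sSup (X ω '' Set.Icc (-h') 0) ∧
            sSup (X ω '' (Set.Icc 0 (S - h') \ Set.Icc h (st + h))) < u}).toReal := by
  have hst₀ := hst.1
  set I := Icc h (st + h)
  have hI : I ⊆ Icc 0 (S - h') := Icc_subset_Icc hh.le (by linarith)
  have hD : (Icc 0 (S - h') \ I).Nonempty := ⟨0, ⟨le_rfl, by linarith⟩, fun h0 => hh.not_ge h0.1⟩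
  set E := {ω | u ≤ sSup (X ω '' I) ∧ sSup (X ω '' (Icc 0 (S - h') \ I)) < u}
  set below : Set ℝ → Set Ω := fun J => {ω | sSup (X ω '' J) < u}
  have hμ : {ω | u ≤ sSup (X ω '' I) ∧ sSup (X ω '' (Icc 0 S \ I)) < u}
      = E ∩ below (Icc (S - h') S) := by
    ext ω
    rw [mem_ofPred_eq, (hCont ω).csSup_image_Icc_sdiff_lt_iff_of_subset_Iic (by linarith)
      (by linarith) (hI.trans Icc_subset_Iic_self) hD]
    simp only [E, below, mem_ofPred_eq, mem_inter_iff, and_assoc]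
  have hμshift := measure_csSup_image_image_add_const P hCont hMeas (hStat h') u I
    (Icc (-h') (S - h') \ I)
  have hshiftI : (· + h') '' I = Icc (h + h') (st + (h + h')) := by
    rw [image_add_const_Icc, add_assoc]
  rw [image_sdiff (add_left_injective h'), hshiftI, image_add_const_Icc, neg_add_cancel,
    sub_add_cancel] at hμshift
  have hμ' : {ω | u ≤ sSup (X ω '' I) ∧ sSup (X ω '' (Icc (-h') (S - h') \ I)) < u}
      = E ∩ below (Icc (-h') 0) := by
    ext ω
    rw [mem_ofPred_eq, (hCont ω).csSup_image_Icc_sdiff_lt_iff_of_subset_Ici (neg_lt_zero.2 hh')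
      (by linarith) (hI.trans Icc_subset_Ici_self) hD]
    simp only [E, below, mem_ofPred_eq, mem_inter_iff]
    tauto
  have hexceed (J : Set ℝ) : {ω | u ≤ sSup (X ω '' I) ∧ u ≤ sSup (X ω '' J) ∧
      sSup (X ω '' (Icc 0 (S - h') \ I)) < u} = E \ below J := by
    ext ω
    simp only [E, below, mem_ofPred_eq, mem_sdiff, not_lt]
    tauto
  have hbelow (J : Set ℝ) : MeasurableSet (below J) :=
    measurableSet_lt (measurable_csSup_image hCont hMeas J) measurable_const
  rw [hμshift, hμ', hμ, hexceed, hexceed]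
  exact measureReal_inter_sub_measureReal_inter P E (hbelow _) (hbelow _)

/-- Let `X` be a strictly stationary real-valued process with continuous
sample paths, `S > 0`, `s̃ ∈ (0, S)`, `u ∈ ℝ`, and `0 < h`, `0 < h'` with
`h + h' ≤ S − s̃`. With `μ(g) = P(sup_{[g, s̃+g]} X ≥ u, sup_{[0,S]∖[g, s̃+g]} X < u)`,
the key difference identity of the proof of Theorem 1 holds:
`μ(h+h') − μ(h)
  = P(sup_{[h, s̃+h]} X ≥ u, sup_{[S−h', S]} X ≥ u, sup_{[0, S−h']∖[h, s̃+h]} X < u)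
  − P(sup_{[h, s̃+h]} X ≥ u, sup_{[−h', 0]} X ≥ u, sup_{[0, S−h']∖[h, s̃+h]} X < u)`. -/
theorem stationary_window_difference_identity
    {Ω : Type*} [MeasurableSpace Ω] (P : Measure Ω) [IsProbabilityMeasure P]
    (X : Ω → ℝ → ℝ)
    (hCont : ∀ ω, Continuous (X ω))
    (hMeas : ∀ s : ℝ, Measurable (fun ω => X ω s))
    (hStat : ∀ t : ℝ,
      Measure.map (fun ω => fun s => X ω (s + t)) P = Measure.map (fun ω => X ω) P)
    (S st u : ℝ) (hS : 0 < S) (hst : st ∈ Set.Ioo 0 S)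
    (h h' : ℝ) (hh : 0 < h) (hh' : 0 < h') (hsum : h + h' ≤ S - st) :
    (P {ω | u ≤ sSup (X ω '' Set.Icc (h + h') (st + (h + h'))) ∧
        sSup (X ω '' (Set.Icc 0 S \ Set.Icc (h + h') (st + (h + h')))) < u}).toReal
      - (P {ω | u ≤ sSup (X ω '' Set.Icc h (st + h)) ∧
          sSup (X ω '' (Set.Icc 0 S \ Set.Icc h (st + h))) < u}).toReal
      = (P {ω | u ≤ sSup (X ω '' Set.Icc h (st + h)) ∧
            u ≤ sSup (X ω '' Set.Icc (S - h') S) ∧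
            sSup (X ω '' (Set.Icc 0 (S - h') \ Set.Icc h (st + h))) < u}).toReal
        - (P {ω | u ≤ sSup (X ω '' Set.Icc h (st + h)) ∧
            u ≤ sSup (X ω '' Set.Icc (-h') 0) ∧
            sSup (X ω '' (Set.Icc 0 (S - h') \ Set.Icc h (st + h))) < u}).toReal :=
  stationary_window_difference_identity_general P X hCont hMeas hStat S st u hst h h' hh hh' hsum
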